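/- The quantization of the adjoint is the adjoint of the quantization: let K be a coherent product on a nonempty set Z, let (H, f) be a quantum space realization of (Z, K), and let A : Z → Z be coherent with adjoint B : Z → Z; assume B is also coherent (with adjoint A). Let Γ(A) and Γ(B) be the quantizations on the span S of the coherent states. Then ⟪Γ(A) u, v⟫ = ⟪u, Γ(B) v⟫ for all u, v ∈ S. -/

import Mathlib

open scoped ComplexConjugate

noncomputable section

/-- A coherent product on `Z`: Hermitian and all finite Gram matrices positive semidefinite. -/
def IsCoherentProduct {Z : Type*} (K : Z → Z → ℂ) : Prop :=
  (∀ z z' : Z, conj (K z z') = K z' z) ∧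
  ∀ (n : ℕ) (z : Fin n → Z) (c : Fin n → ℂ),
    ∃ r : ℝ, 0 ≤ r ∧ (∑ j, ∑ k, conj (c j) * K (z j) (z k) * c k) = (r : ℂ)

/-- The distance associated to a coherent product. -/
def cohDist {Z : Type*} (K : Z → Z → ℂ) (z z' : Z) : ℝ :=
  Real.sqrt ((K z z).re + (K z' z').re - 2 * (K z z').re)

/-- A quantum space realization of `(Z, K)`: a complex Hilbert space `H` and a map
`f : Z → H` whose inner products realize `K` and whose range has dense span. -/
def IsQuantumSpace {Z : Type*} (K : Z → Z → ℂ) (H : Type*) [NormedAddCommGroup H]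
    [InnerProductSpace ℂ H] [CompleteSpace H] (f : Z → H) : Prop :=
  (∀ z z' : Z, (inner ℂ (f z) (f z') : ℂ) = K z z') ∧
  Dense (Submodule.span ℂ (Set.range f) : Set H)

/-- The span of the coherent states. -/
def cohSpan {Z H : Type*} [NormedAddCommGroup H] [InnerProductSpace ℂ H]
    (f : Z → H) : Submodule ℂ H :=
  Submodule.span ℂ (Set.range f)

/-- The coherent state `f z`, seen as an element of the span of the coherent states. -/
def cohState {Z H : Type*} [NormedAddCommGroup H] [InnerProductSpace ℂ H]
    (f : Z → H) (z : Z) : cohSpan f :=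
  ⟨f z, Submodule.subset_span (Set.mem_range_self z)⟩

theorem LinearMap.inner_map_eq_inner_map_of_span_eq_top {𝕜 E ι : Type*} [RCLike 𝕜]
    [SeminormedAddCommGroup E] [InnerProductSpace 𝕜 E] {S : Submodule 𝕜 E} {v : ι → S}
    (hv : Submodule.span 𝕜 (Set.range v) = ⊤) {T T' : S →ₗ[𝕜] E}
    (h : ∀ i j, (inner 𝕜 (T (v i)) (v j : E) : 𝕜) = inner 𝕜 (v i : E) (T' (v j))) (u w : S) :
    (inner 𝕜 (T u) (w : E) : 𝕜) = inner 𝕜 (u : E) (T' w) := by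
  have forms_eq : ((innerₛₗ 𝕜).comp T).compl₂ S.subtype = ((innerₛₗ 𝕜).comp S.subtype).compl₂ T' :=
    LinearMap.ext_on_range hv fun i ↦ LinearMap.ext_on_range hv fun j ↦ h i j
  exact LinearMap.congr_fun₂ forms_eq u w

theorem span_range_cohState {Z H : Type*} [NormedAddCommGroup H] [InnerProductSpace ℂ H]
    (f : Z → H) : Submodule.span ℂ (Set.range (cohState f)) = ⊤ := by
  have preimage_eq : ((↑) : cohSpan f → H) ⁻¹' Set.range f = Set.range (cohState f) := by
    ext x
    exact ⟨fun ⟨z, hz⟩ ↦ ⟨z, Subtype.ext hz⟩, fun ⟨z, hz⟩ ↦ ⟨z, congrArg Subtype.val hz⟩⟩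
  rw [← preimage_eq]
  exact Submodule.span_span_coe_preimage

theorem stmt_9_general {Z : Type*} (K : Z → Z → ℂ)
    {H : Type*} [NormedAddCommGroup H] [InnerProductSpace ℂ H] [CompleteSpace H]
    (f : Z → H) (hq : IsQuantumSpace K H f)
    (A B : Z → Z)
    (hBA : ∀ z z' : Z, K z (B z') = K (A z) z')
    (TA TB : cohSpan f →ₗ[ℂ] H)
    (hTA : ∀ z : Z, TA (cohState f z) = f (A z))
    (hTB : ∀ z : Z, TB (cohState f z) = f (B z)) :
    ∀ u v : cohSpan f, (inner ℂ (TA u) (v : H) : ℂ) = inner ℂ (u : H) (TB v) := by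
  intro u v
  refine LinearMap.inner_map_eq_inner_map_of_span_eq_top (span_range_cohState f) (fun z z' ↦ ?_) u v
  rw [hTA, hTB]
  exact ((hq.1 _ _).trans (hBA z z').symm).trans (hq.1 _ _).symm

/-- the quantization of the adjoint is the adjoint of the quantization:
`⟪Γ(A) u, v⟫ = ⟪u, Γ(B) v⟫` on the span of the coherent states. -/
theorem stmt_9 {Z : Type*} [Nonempty Z] (K : Z → Z → ℂ) (hK : IsCoherentProduct K)
    {H : Type*} [NormedAddCommGroup H] [InnerProductSpace ℂ H] [CompleteSpace H]
    (f : Z → H) (hq : IsQuantumSpace K H f)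
    (A B : Z → Z)
    (hAB : ∀ z z' : Z, K z (A z') = K (B z) z')
    (hBA : ∀ z z' : Z, K z (B z') = K (A z) z')
    (TA TB : cohSpan f →ₗ[ℂ] H)
    (hTA : ∀ z : Z, TA (cohState f z) = f (A z))
    (hTB : ∀ z : Z, TB (cohState f z) = f (B z)) :
    ∀ u v : cohSpan f, (inner ℂ (TA u) (v : H) : ℂ) = inner ℂ (u : H) (TB v) :=
  stmt_9_general K f hq A B hBA TA TB hTA hTB
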